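/- arXiv:1410.4090 — 4 statements merged into one kernel-verified Lean document; each statement's English description precedes it below -/
import Mathlib

section
/- Let $n, m \ge 0$ and let $f \in C^{m+n}([a,b])$ satisfy $f(t_i) = 0$ for distinct points $t_1, \dots, t_n \in [a,b]$. Then there exists $g \in C^{m}([a,b])$ such that $f(t) = g(t) \prod_{i=1}^{n} (t - t_i)$ for all $t \in [a,b]$. -/
/-!
Hadamard's lemma: if `f c = 0`, then `f x = (x - c) * g x` with
`g x = ∫ s in 0..1, f' (c + (x - c) * s)`. Differentiating under the integral sign, which on a
compact interval is justified by the uniform continuity of the integrand's derivative and the mean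
value inequality, shows that `g` has one derivative fewer than `f`. As the `t i` are distinct, `g`
still vanishes at the remaining points, so the linear factors can be divided out one at a time.
-/

open Set intervalIntegral

variable {E : Type*} [NormedAddCommGroup E] [NormedSpace ℝ E]

theorem continuousOn_intervalIntegral_of_continuousOn_prod {S : Set ℝ} (hS : IsCompact S)
    {α β : ℝ} (hαβ : α ≤ β) {F : ℝ × ℝ → E} (hF : ContinuousOn F (S ×ˢ Icc α β)) :
    ContinuousOn (fun x => ∫ s in α..β, F (x, s)) S := by
  obtain ⟨M, hM⟩ := (hS.prod isCompact_Icc).exists_bound_of_continuousOn hF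
  have hslice : ∀ x ∈ S, ContinuousOn (fun s => F (x, s)) (Icc α β) := fun x hx =>
    hF.comp (by fun_prop) fun s hs => ⟨hx, hs⟩
  intro x₀ hx₀
  refine continuousWithinAt_of_dominated_interval (bound := fun _ => M) ?_ ?_
    intervalIntegrable_const ?_
  · filter_upwards [self_mem_nhdsWithin] with x hx
    exact ((hslice x hx).mono (uIoc_of_le hαβ ▸ Ioc_subset_Icc_self)).aestronglyMeasurable
      measurableSet_uIoc
  · filter_upwards [self_mem_nhdsWithin] with x hx
    refine Filter.Eventually.of_forall fun s hs => hM _ ⟨hx, ?_⟩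
    exact Ioc_subset_Icc_self (uIoc_of_le hαβ ▸ hs)
  · refine Filter.Eventually.of_forall fun s hs => ?_
    exact (hF.comp (by fun_prop) fun x hx => ⟨hx, Ioc_subset_Icc_self (uIoc_of_le hαβ ▸ hs)⟩) x₀ hx₀

theorem exists_norm_sub_sub_smul_le_of_hasDerivWithinAt {S T : Set ℝ} (hS : IsCompact S)
    (hSc : Convex ℝ S) (hT : IsCompact T) {F F' : ℝ × ℝ → E}
    (hF : ∀ s ∈ T, ∀ x ∈ S, HasDerivWithinAt (fun y => F (y, s)) (F' (x, s)) S x)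
    (hF' : ContinuousOn F' (S ×ˢ T)) {ε : ℝ} (hε : 0 < ε) :
    ∃ δ > 0, ∀ s ∈ T, ∀ x₀ ∈ S, ∀ x ∈ S, |x - x₀| < δ →
      ‖F (x, s) - F (x₀, s) - (x - x₀) • F' (x₀, s)‖ ≤ ε * |x - x₀| := by
  obtain ⟨δ, hδ, hF'δ⟩ := Metric.uniformContinuousOn_iff.1
    ((hS.prod hT).uniformContinuousOn_of_continuous hF') ε hε
  refine ⟨δ, hδ, fun s hs x₀ hx₀ x hx hxx₀ => ?_⟩
  have hseg : segment ℝ x₀ x ⊆ S := hSc.segment_subset hx₀ hx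
  have hderiv : ∀ y ∈ segment ℝ x₀ x, HasDerivWithinAt (fun y => F (y, s) - (y - x₀) • F' (x₀, s))
      (F' (y, s) - F' (x₀, s)) (segment ℝ x₀ x) y := fun y hy => by
    simpa using ((hF s hs y (hseg hy)).mono hseg).fun_sub
      (((hasDerivAt_id y).sub_const x₀).smul_const (F' (x₀, s))).hasDerivWithinAt
  have hbound : ∀ y ∈ segment ℝ x₀ x, ‖F' (y, s) - F' (x₀, s)‖ ≤ ε := fun y hy => by
    rw [← dist_eq_norm]
    refine (hF'δ _ ⟨hseg hy, hs⟩ _ ⟨hx₀, hs⟩ ?_).le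
    rw [Prod.dist_eq, dist_self, max_eq_left dist_nonneg, Real.dist_eq]
    exact (abs_sub_left_of_mem_uIcc (segment_eq_uIcc x₀ x ▸ hy)).trans_lt hxx₀
  convert (convex_segment x₀ x).norm_image_sub_le_of_norm_hasDerivWithin_le hderiv hbound
      (left_mem_segment ℝ x₀ x) (right_mem_segment ℝ x₀ x) using 2
  · simp only [sub_self, zero_smul, sub_zero]
    abel
  · rw [Real.norm_eq_abs]

theorem hasDerivWithinAt_intervalIntegral_of_hasDerivWithinAt {S : Set ℝ} (hS : IsCompact S)
    (hSc : Convex ℝ S) {α β : ℝ} (hαβ : α ≤ β) {F F' : ℝ × ℝ → E}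
    (hFc : ContinuousOn F (S ×ˢ Icc α β))
    (hF : ∀ s ∈ Icc α β, ∀ x ∈ S, HasDerivWithinAt (fun y => F (y, s)) (F' (x, s)) S x)
    (hF' : ContinuousOn F' (S ×ˢ Icc α β)) {x₀ : ℝ} (hx₀ : x₀ ∈ S) :
    HasDerivWithinAt (fun x => ∫ s in α..β, F (x, s)) (∫ s in α..β, F' (x₀, s)) S x₀ := by
  have hint : ∀ {G : ℝ × ℝ → E}, ContinuousOn G (S ×ˢ Icc α β) → ∀ x ∈ S,
      IntervalIntegrable (fun s => G (x, s)) MeasureTheory.volume α β := fun hG x hx =>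
    (hG.comp (by fun_prop) fun s hs => ⟨hx, hs⟩).intervalIntegrable_of_Icc hαβ
  rw [hasDerivWithinAt_iff_isLittleO, Asymptotics.isLittleO_iff]
  intro ε hε
  obtain ⟨δ, hδ, hTaylor⟩ := exists_norm_sub_sub_smul_le_of_hasDerivWithinAt hS hSc
    isCompact_Icc hF hF' (div_pos hε (by linarith : (0:ℝ) < β - α + 1))
  filter_upwards [inter_mem_nhdsWithin S (Metric.ball_mem_nhds x₀ hδ)] with x ⟨hx, hxδ⟩
  rw [Metric.mem_ball, Real.dist_eq] at hxδ
  have hint' : IntervalIntegrable (fun s => (x - x₀) • F' (x₀, s)) MeasureTheory.volume α β :=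
    (hint hF' x₀ hx₀).smul _
  rw [← integral_sub (hint hFc x hx) (hint hFc x₀ hx₀), ← integral_smul,
    ← integral_sub ((hint hFc x hx).sub (hint hFc x₀ hx₀)) hint']
  calc ‖∫ s in α..β, (F (x, s) - F (x₀, s) - (x - x₀) • F' (x₀, s))‖
      ≤ ε / (β - α + 1) * |x - x₀| * |β - α| :=
        norm_integral_le_of_norm_le_const fun s hs =>
          hTaylor s (Ioc_subset_Icc_self (uIoc_of_le hαβ ▸ hs)) x₀ hx₀ x hx hxδ
    _ ≤ ε * ‖x - x₀‖ := by
        rw [Real.norm_eq_abs, abs_of_nonneg (sub_nonneg.2 hαβ), mul_right_comm]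
        refine mul_le_mul_of_nonneg_right ?_ (abs_nonneg _)
        rw [div_mul_eq_mul_div, div_le_iff₀ (by linarith)]
        nlinarith

theorem contDiffOn_intervalIntegral_of_contDiffOn_prod {S : Set ℝ} (hS : IsCompact S)
    (hSc : Convex ℝ S) (hSu : UniqueDiffOn ℝ S) {α β : ℝ} (hαβ : α < β) (k : ℕ) :
    ∀ {G : ℝ × ℝ → E}, ContDiffOn ℝ k G (S ×ˢ Icc α β) →
      ContDiffOn ℝ k (fun x => ∫ s in α..β, G (x, s)) S := by
  have hU : UniqueDiffOn ℝ (S ×ˢ Icc α β) := hSu.prod (uniqueDiffOn_Icc hαβ)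
  induction k with
  | zero =>
    intro G hG
    exact contDiffOn_zero.2 <|
      continuousOn_intervalIntegral_of_continuousOn_prod hS hαβ.le (contDiffOn_zero.1 hG)
  | succ k ih =>
    intro G hG
    set G' : ℝ × ℝ → E := fun p => fderivWithin ℝ G (S ×ˢ Icc α β) p (1, 0)
    have hG' : ContDiffOn ℝ k G' (S ×ˢ Icc α β) :=
      (hG.fderivWithin hU le_rfl).clm_apply contDiffOn_const
    have hderiv : ∀ s ∈ Icc α β, ∀ x ∈ S,
        HasDerivWithinAt (fun y => G (y, s)) (G' (x, s)) S x := fun s hs x hx =>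
      (hG.differentiableOn (by simp) (x, s) ⟨hx, hs⟩).hasFDerivWithinAt.comp_hasDerivWithinAt
        (t := S ×ˢ Icc α β) x ((hasDerivAt_id x).prodMk (hasDerivAt_const x s)).hasDerivWithinAt
        fun y hy => ⟨hy, hs⟩
    have hint : ∀ x ∈ S, HasDerivWithinAt (fun x => ∫ s in α..β, G (x, s))
        (∫ s in α..β, G' (x, s)) S x := fun x hx =>
      hasDerivWithinAt_intervalIntegral_of_hasDerivWithinAt hS hSc hαβ.le hG.continuousOn
        hderiv hG'.continuousOn hx
    rw [Nat.cast_succ, contDiffOn_succ_iff_derivWithin hSu]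
    refine ⟨fun x hx => (hint x hx).differentiableWithinAt, by simp, ?_⟩
    exact (ih hG').congr fun x hx => (hint x hx).derivWithin (hSu x hx)

theorem sub_eq_mul_integral_derivWithin_Icc {a b c x : ℝ} (hab : a < b) {f : ℝ → ℝ}
    (hf : ContDiffOn ℝ 1 f (Icc a b)) (hc : c ∈ Icc a b) (hx : x ∈ Icc a b) :
    f x - f c = (x - c) * ∫ s in (0 : ℝ)..1, derivWithin f (Icc a b) (c + (x - c) * s) := by
  have hsub : uIcc c x ⊆ Icc a b := uIcc_subset_Icc hc hx
  have hf' : ContinuousOn (derivWithin f (Icc a b)) (Icc a b) :=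
    hf.continuousOn_derivWithin (uniqueDiffOn_Icc hab) le_rfl
  rw [← smul_eq_mul, smul_integral_comp_add_mul, mul_zero, mul_one, add_zero, add_sub_cancel]
  refine (integral_eq_sub_of_hasDeriv_right (hf.continuousOn.mono hsub) (fun y hy => ?_)
    ((hf'.mono hsub).intervalIntegrable)).symm
  have hy' : y ∈ Ioo a b :=
    ⟨(le_min hc.1 hx.1).trans_lt hy.1, hy.2.trans_le (max_le hc.2 hx.2)⟩
  exact ((hf.differentiableOn one_ne_zero y (Ioo_subset_Icc_self hy')).hasDerivWithinAt.hasDerivAt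
    (Icc_mem_nhds hy'.1 hy'.2)).hasDerivWithinAt

theorem exists_contDiffOn_eq_sub_mul_of_eq_zero {a b c : ℝ} (hab : a ≤ b) (hc : c ∈ Icc a b)
    {k : ℕ} {f : ℝ → ℝ} (hf : ContDiffOn ℝ (k + 1) f (Icc a b)) (hfc : f c = 0) :
    ∃ g : ℝ → ℝ, ContDiffOn ℝ k g (Icc a b) ∧ ∀ x ∈ Icc a b, f x = (x - c) * g x := by
  rcases hab.eq_or_lt with rfl | hab
  · refine ⟨0, contDiffOn_const, fun x hx => ?_⟩
    rw [le_antisymm hx.2 hx.1, ← le_antisymm hc.2 hc.1, hfc, sub_self, zero_mul]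
  have hmaps : MapsTo (fun p : ℝ × ℝ => c + (p.1 - c) * p.2) (Icc a b ×ˢ Icc 0 1) (Icc a b) :=
    fun p hp => by
      simpa [mul_comm] using (convex_Icc a b).add_smul_sub_mem hc hp.1 hp.2
  have hG : ContDiffOn ℝ k (fun p : ℝ × ℝ => derivWithin f (Icc a b) (c + (p.1 - c) * p.2))
      (Icc a b ×ˢ Icc 0 1) :=
    (hf.derivWithin (uniqueDiffOn_Icc hab) le_rfl).comp (by fun_prop) hmaps
  refine ⟨_, contDiffOn_intervalIntegral_of_contDiffOn_prod isCompact_Icc (convex_Icc a b)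
    (uniqueDiffOn_Icc hab) zero_lt_one k hG, fun x hx => ?_⟩
  rw [← (sub_eq_self (a := f x)).2 hfc]
  exact sub_eq_mul_integral_derivWithin_Icc hab (hf.of_le (by simp)) hc hx

theorem stmt_1 (n m : ℕ) (a b : ℝ) (hab : a ≤ b) (f : ℝ → ℝ)
    (hf : ContDiffOn ℝ (m + n) f (Set.Icc a b))
    (t : Fin n → ℝ) (ht : Function.Injective t)
    (htmem : ∀ i, t i ∈ Set.Icc a b)
    (hzero : ∀ i, f (t i) = 0) :
    ∃ g : ℝ → ℝ, ContDiffOn ℝ m g (Set.Icc a b) ∧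
      ∀ x ∈ Set.Icc a b, f x = g x * ∏ i, (x - t i) := by
  induction n generalizing f with
  | zero => exact ⟨f, by simpa using hf, by simp⟩
  | succ n ih =>
    obtain ⟨g₁, hg₁, hfg₁⟩ :=
      exists_contDiffOn_eq_sub_mul_of_eq_zero hab (htmem 0) (k := m + n) hf (hzero 0)
    have hg₁zero : ∀ i : Fin n, g₁ (t i.succ) = 0 := fun i => by
      have hne : t i.succ - t 0 ≠ 0 := sub_ne_zero.2 (ht.ne (Fin.succ_ne_zero i))
      simpa [hzero, hne] using (hfg₁ _ (htmem i.succ)).symm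
    obtain ⟨g, hg, hg₁g⟩ := ih g₁ (by exact_mod_cast hg₁) (t ∘ Fin.succ)
      (ht.comp (Fin.succ_injective n)) (fun i => htmem i.succ) hg₁zero
    refine ⟨g, hg, fun x hx => ?_⟩
    rw [hfg₁ x hx, hg₁g x hx, Fin.prod_univ_succ]
    simp only [Function.comp_apply]
    ring
end

section
/- Let $c_1, \dots, c_s$ be real numbers and $P(\xi) = \prod_{i=1}^{s}(\xi - c_i)$. Suppose $\int_0^1 \xi^k P(\xi)\, d\xi = 0$ for $k = 0, 1, 2$. Then the condition $\int_0^1 \int_0^{1+x} \int_0^t P(\xi)\, d\xi\, dt\, dx = 0$ holds if and only if $\int_1^2 (\xi - 2)^2 P(\xi)\, d\xi = 0$. -/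
/-!
Write `Q` and `F` for the first and second primitives of `P` vanishing at `0`. The moments
`k = 0, 1` say `Q 1 = 0` and `F 1 = 0`, so `Q` and `F` are also the primitives vanishing at `1`.
The triple integral is then `∫₁² F`, while two integrations by parts (Cauchy's formula for
repeated integration) turn `∫₁² (ξ - 2)² P ξ dξ` into `2 ∫₁² F`.
-/

open intervalIntegral
open MeasureTheory (volume)

section RepeatedIntegration

variable {f : ℝ → ℝ}

/-- Both boundary terms of the integration by parts vanish: the primitive vanishes at `a` and
the weight at `b`. -/
theorem integral_deriv_mul_primitive_eq_neg {w w' : ℝ → ℝ} {a b : ℝ}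
    (hw : ∀ x ∈ Set.uIcc a b, HasDerivAt w (w' x) x) (hw' : IntervalIntegrable w' volume a b)
    (hf : Continuous f) (hwb : w b = 0) :
    ∫ x in a..b, w' x * ∫ t in a..x, f t = -∫ x in a..b, w x * f x := by
  have hparts := integral_mul_deriv_eq_deriv_mul hw
    (fun x _ => (hf.integral_hasStrictDerivAt a x).hasDerivAt) hw' (hf.intervalIntegrable a b)
  rw [hwb, integral_same, zero_mul, mul_zero, sub_self, zero_sub] at hparts
  rw [hparts, neg_neg]

theorem integral_primitive_eq_integral_sub_mul (hf : Continuous f) (a b : ℝ) :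
    ∫ u in a..b, ∫ ξ in a..u, f ξ = ∫ ξ in a..b, (b - ξ) * f ξ := by
  have h := integral_deriv_mul_primitive_eq_neg (a := a) (w := fun x => x - b) (w' := fun _ => 1)
    (fun x _ => (hasDerivAt_id x).sub_const b) intervalIntegrable_const hf (sub_self b)
  simp only [one_mul] at h
  rw [h, ← integral_neg]
  congr 1 with ξ
  ring

theorem integral_primitive_eq_zero_of_moments {a b : ℝ} (hf : Continuous f)
    (hmom0 : ∫ ξ in a..b, f ξ = 0) (hmom1 : ∫ ξ in a..b, ξ * f ξ = 0) :
    ∫ u in a..b, ∫ ξ in a..u, f ξ = 0 := by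
  rw [integral_primitive_eq_integral_sub_mul hf]
  simp only [sub_mul]
  rw [integral_sub ((by fun_prop : Continuous fun ξ => b * f ξ).intervalIntegrable a b)
    ((by fun_prop : Continuous fun ξ => ξ * f ξ).intervalIntegrable a b), integral_const_mul,
    hmom0, hmom1, mul_zero, sub_zero]

theorem two_mul_integral_second_primitive_eq_integral_sq_mul (hf : Continuous f) (a b : ℝ) :
    2 * ∫ t in a..b, ∫ u in a..t, ∫ ξ in a..u, f ξ = ∫ ξ in a..b, (ξ - b) ^ 2 * f ξ := by
  have hQ : Continuous fun u => ∫ ξ in a..u, f ξ := continuous_primitive hf.intervalIntegrable a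
  have hsq := integral_deriv_mul_primitive_eq_neg (a := a) (w := fun x => (x - b) ^ 2)
    (w' := fun x => 2 * (x - b))
    (fun x _ => by simpa using ((hasDerivAt_id x).sub_const b).fun_pow 2)
    ((by fun_prop : Continuous fun x : ℝ => 2 * (x - b)).intervalIntegrable a b) hf (by simp)
  rw [integral_primitive_eq_integral_sub_mul hQ, ← integral_const_mul,
    ← neg_neg (∫ ξ in a..b, (ξ - b) ^ 2 * f ξ), ← hsq, ← integral_neg]
  congr 1 with ξ
  ring

theorem integral_eq_integral_of_integral_eq_zero {a b t : ℝ}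
    (hab : IntervalIntegrable f volume a b)
    (hbt : IntervalIntegrable f volume b t) (h : ∫ x in a..b, f x = 0) :
    ∫ x in b..t, f x = ∫ x in a..t, f x := by
  rw [← integral_add_adjacent_intervals hab hbt, h, zero_add]

end RepeatedIntegration

theorem stmt_5 (s : ℕ) (c : Fin s → ℝ) (P : ℝ → ℝ)
    (hP : ∀ ξ, P ξ = ∏ i, (ξ - c i))
    (hmom : ∀ k : ℕ, k ≤ 2 → (∫ ξ in (0:ℝ)..1, ξ ^ k * P ξ) = 0) :
    (∫ x in (0:ℝ)..1, ∫ t in (0:ℝ)..(1 + x), ∫ ξ in (0:ℝ)..t, P ξ) = 0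
      ↔ (∫ ξ in (1:ℝ)..2, (ξ - 2) ^ 2 * P ξ) = 0 := by
  have hPc : Continuous P := by
    rw [show P = _ from funext hP]
    fun_prop
  have hQc : Continuous fun u => ∫ ξ in (0:ℝ)..u, P ξ :=
    continuous_primitive hPc.intervalIntegrable 0
  have hmom0 : ∫ ξ in (0:ℝ)..1, P ξ = 0 := by simpa using hmom 0 (by norm_num)
  have hF1 : ∫ u in (0:ℝ)..1, ∫ ξ in (0:ℝ)..u, P ξ = 0 :=
    integral_primitive_eq_zero_of_moments hPc hmom0 (by simpa using hmom 1 (by norm_num))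
  have hQ_from_one (u : ℝ) : ∫ ξ in (1:ℝ)..u, P ξ = ∫ ξ in (0:ℝ)..u, P ξ :=
    integral_eq_integral_of_integral_eq_zero (hPc.intervalIntegrable _ _)
      (hPc.intervalIntegrable _ _) hmom0
  have hF_from_one (t : ℝ) :
      ∫ u in (1:ℝ)..t, ∫ ξ in (1:ℝ)..u, P ξ = ∫ u in (0:ℝ)..t, ∫ ξ in (0:ℝ)..u, P ξ := by
    simp_rw [hQ_from_one]
    exact integral_eq_integral_of_integral_eq_zero (hQc.intervalIntegrable _ _)
      (hQc.intervalIntegrable _ _) hF1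
  have hLHS : (∫ x in (0:ℝ)..1, ∫ t in (0:ℝ)..(1 + x), ∫ ξ in (0:ℝ)..t, P ξ)
      = ∫ t in (1:ℝ)..2, ∫ u in (0:ℝ)..t, ∫ ξ in (0:ℝ)..u, P ξ := by
    rw [integral_comp_add_left (fun t => ∫ u in (0:ℝ)..t, ∫ ξ in (0:ℝ)..u, P ξ) 1]
    norm_num
  have hRHS := two_mul_integral_second_primitive_eq_integral_sq_mul hPc 1 2
  simp_rw [hF_from_one] at hRHS
  rw [hLHS, ← hRHS]
  exact (mul_eq_zero_iff_left two_ne_zero).symm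
end

section
/- Let $s \ge 1$ and let $A, \tilde{b}, \tilde{d} \in \mathbb{R}^{s \times s}, \mathbb{R}^s, \mathbb{R}^s$ respectively, with $\mathbf{e} = (1,\dots,1)^T$ and $\mathbf{c} = (c_1,\dots,c_s)^T$. For $z \in \mathbb{R}$ such that the matrix $T(z) = \begin{pmatrix} zA & \mathbf{e} & \mathbf{c} \\ 0 & 1 & 0 \\ 0 & 0 & 1 \end{pmatrix}$ is invertible, define $M(z) = \begin{pmatrix} z[A + \mathbf{e}b^T + \mathbf{c}d^T] & \mathbf{e} & \mathbf{e}+\mathbf{c} \\ z b^T & 1 & 1 \\ z d^T & 0 & 1 \end{pmatrix}$ and $\tilde{M}(z) = \begin{pmatrix} zA & \mathbf{e} & \mathbf{c} \\ z^2 b^T A & 1 + z b^T \mathbf{e} & 1 + z b^T \mathbf{c} \\ z^2 d^T A & z d^T \mathbf{e} & 1 + z d^T \mathbf{c} \end{pmatrix}$, where $b, d \in \mathbb{R}^s$. Then $M(z) = T(z)\, \tilde{M}(z)\, T(z)^{-1}$; in particular $M(z)$ and $\tilde{M}(z)$ are similar and have the same eigenvalues and spectral radius. -/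
open Polynomial Matrix in
lemma charpoly_conj_aux {n : Type*} [Fintype n] [DecidableEq n] {R : Type*} [CommRing R]
    (T N : Matrix n n R) (h : IsUnit T.det) :
    (T * N * T⁻¹).charpoly = N.charpoly := by
  have hmap : (T.map (C : R →+* R[X])) * (T⁻¹.map C) = 1 := by
    rw [← Matrix.map_mul, Matrix.mul_nonsing_inv _ h]
    simp
  have hconj : charmatrix (T * N * T⁻¹) =
      (T.map (C : R →+* R[X])) * charmatrix N * (T⁻¹.map C) := by
    unfold charmatrix
    rw [Matrix.mul_sub, Matrix.sub_mul]
    congr 1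
    · rw [(Matrix.scalar_commute (X : R[X]) (Commute.all X) (T.map C)).symm.eq,
        Matrix.mul_assoc, hmap, Matrix.mul_one]
    · simp [Matrix.map_mul, Matrix.mul_assoc]
  have hdet : (T.map (C : R →+* R[X])).det * (T⁻¹.map C).det = 1 := by
    rw [← Matrix.det_mul, hmap, Matrix.det_one]
  rw [Matrix.charpoly, hconj, Matrix.det_mul, Matrix.det_mul, Matrix.charpoly]
  ring_nf
  rw [mul_comm, ← mul_assoc, mul_comm (Matrix.det (T⁻¹.map C)), hdet, one_mul]

theorem stmt_9 (s : ℕ) (hs : 1 ≤ s) (A : Matrix (Fin s) (Fin s) ℝ)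
    (b d c : Fin s → ℝ) (z : ℝ)
    (T M Mt : Matrix (Fin s ⊕ Fin 2) (Fin s ⊕ Fin 2) ℝ)
    (hT : T = Matrix.of fun p q =>
      match p, q with
      | Sum.inl i, Sum.inl j => z * A i j
      | Sum.inl i, Sum.inr k => ![1, c i] k
      | Sum.inr _, Sum.inl _ => 0
      | Sum.inr k, Sum.inr l => !![1, 0; 0, 1] k l)
    (hM : M = Matrix.of fun p q =>
      match p, q with
      | Sum.inl i, Sum.inl j => z * (A i j + b j + c i * d j)
      | Sum.inl i, Sum.inr k => ![1, 1 + c i] k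
      | Sum.inr k, Sum.inl j => ![z * b j, z * d j] k
      | Sum.inr k, Sum.inr l => !![1, 1; 0, 1] k l)
    (hMt : Mt = Matrix.of fun p q =>
      match p, q with
      | Sum.inl i, Sum.inl j => z * A i j
      | Sum.inl i, Sum.inr k => ![1, c i] k
      | Sum.inr k, Sum.inl j =>
          ![z ^ 2 * ∑ m, b m * A m j, z ^ 2 * ∑ m, d m * A m j] k
      | Sum.inr k, Sum.inr l =>
          !![1 + z * ∑ m, b m, 1 + z * ∑ m, b m * c m;
             z * ∑ m, d m, 1 + z * ∑ m, d m * c m] k l)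
    (hTinv : IsUnit T.det) :
    M = T * Mt * T⁻¹ ∧ M.charpoly = Mt.charpoly := by
  have key : M * T = T * Mt := by
    subst hT hM hMt
    ext p q
    rcases p with i | k <;> rcases q with j | l <;>
      simp [Matrix.mul_apply, Fintype.sum_sum_type, Fin.sum_univ_two, Matrix.of_apply] <;>
      [skip; fin_cases l; fin_cases k; (fin_cases k <;> fin_cases l)] <;>
      simp [Finset.mul_sum, Finset.sum_mul, Finset.sum_add_distrib, mul_add, add_mul,
        Fin.sum_univ_two, pow_two, mul_comm, mul_left_comm, mul_assoc] <;>
      ring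
  have hMeq : M = T * Mt * T⁻¹ := by
    rw [← key, Matrix.mul_nonsing_inv_cancel_right _ _ hTinv]
  exact ⟨hMeq, hMeq ▸ charpoly_conj_aux T Mt hTinv⟩
end

section
/- Let $R : [0, T] \to \mathbb{R}$ be twice continuously differentiable with $R(0) = 0$ and $R'(0) = 0$, and suppose $R''(t) = g(t) \prod_{i=1}^{s} (t - c_i h) + E(t)$ for all $t \in [0,T]$, where $g$ is continuous, $c_1, \dots, c_s$ are fixed reals, $h \in (0, T]$, and $\sup_{t} |E(t)| \le C h^{s+1}$ for a constant $C$ independent of $h$. Then $|R'(h)| \le h^{s+1}\big( \sup_{\xi \in [0,1]} |g(\xi h)| \cdot \max_{\xi \in [0,1]} \prod_{i=1}^{s} |\xi - c_i| + C h \big)$, i.e., $R'(h) = O(h^{s+1})$. -/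
/-!
Since `R'(0) = 0`, the mean value inequality bounds `|R'(h)|` by `h` times a bound for `|R''|`
on `[0, h]`. Substituting `t = ξ h` gives `∏ i, (t - c i * h) = h ^ s * ∏ i, (ξ - c i)`, so on
`[0, h]` the collocation part of `R''` is at most `h ^ s` times the two suprema over `ξ ∈ [0, 1]`,
and the defect `E` contributes `C h ^ (s + 1)`.
-/

open Set

theorem IsCompact.le_sSup_image_of_continuousOn {K : Set ℝ} {f : ℝ → ℝ} {x : ℝ}
    (hK : IsCompact K) (hf : ContinuousOn f K) (hx : x ∈ K) : f x ≤ sSup (f '' K) :=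
  le_csSup (hK.image_of_continuousOn hf).bddAbove (mem_image_of_mem f hx)

theorem Finset.prod_sub_mul_eq_pow_mul_prod {ι : Type*} [Fintype ι] (c : ι → ℝ) {h : ℝ}
    (hh : h ≠ 0) (t : ℝ) :
    ∏ i, (t - c i * h) = h ^ Fintype.card ι * ∏ i, (t / h - c i) := by
  calc ∏ i, (t - c i * h) = ∏ i, h * (t / h - c i) :=
        Finset.prod_congr rfl fun i _ => by field_simp
    _ = h ^ Fintype.card ι * ∏ i, (t / h - c i) := by
        rw [Finset.prod_mul_distrib, Finset.prod_const, Finset.card_univ]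

theorem abs_mul_prod_sub_le {s : ℕ} (c : Fin s → ℝ) {g : ℝ → ℝ} {h t : ℝ} (hh : 0 < h)
    (hg : ContinuousOn g (Icc 0 h)) (ht : t ∈ Icc 0 h) :
    |g t * ∏ i, (t - c i * h)| ≤ h ^ s *
      (sSup ((fun ξ => |g (ξ * h)|) '' Icc (0:ℝ) 1) *
        sSup ((fun ξ => ∏ i, |ξ - c i|) '' Icc (0:ℝ) 1)) := by
  have hξ : t / h ∈ Icc (0:ℝ) 1 := ⟨div_nonneg ht.1 hh.le, (div_le_one hh).2 ht.2⟩
  have hg_scaled : ContinuousOn (fun ξ => |g (ξ * h)|) (Icc 0 1) :=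
    (hg.comp (continuous_mul_const h).continuousOn fun ξ hξ =>
      ⟨mul_nonneg hξ.1 hh.le, mul_le_of_le_one_left hh.le hξ.2⟩).abs
  have hg_le := isCompact_Icc.le_sSup_image_of_continuousOn hg_scaled hξ
  have hprod_le := isCompact_Icc.le_sSup_image_of_continuousOn
    (f := fun ξ => ∏ i, |ξ - c i|) (by fun_prop) hξ
  simp only [div_mul_cancel₀ t hh.ne'] at hg_le
  rw [abs_mul, Finset.prod_sub_mul_eq_pow_mul_prod c hh.ne', abs_mul, abs_pow, abs_of_pos hh,
    Finset.abs_prod, Fintype.card_fin, mul_left_comm]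
  exact mul_le_mul_of_nonneg_left
    (mul_le_mul hg_le hprod_le (by positivity) ((abs_nonneg _).trans hg_le)) (by positivity)

theorem stmt_10_general (s : ℕ) (c : Fin s → ℝ) (T : ℝ)
    (R' R'' g E : ℝ → ℝ) (h : ℝ) (hh : 0 < h) (hhT : h ≤ T)
    (hR'' : ∀ t ∈ Set.Icc 0 T, HasDerivWithinAt R' (R'' t) (Set.Icc 0 T) t)
    (hgcont : ContinuousOn g (Set.Icc 0 T))
    (hR'0 : R' 0 = 0)
    (hdecomp : ∀ t ∈ Set.Icc 0 T, R'' t = g t * (∏ i, (t - c i * h)) + E t)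
    (C : ℝ) (hE : ∀ t ∈ Set.Icc 0 T, |E t| ≤ C * h ^ (s + 1)) :
    |R' h| ≤ h ^ (s + 1) *
      (sSup ((fun ξ => |g (ξ * h)|) '' Set.Icc (0:ℝ) 1) *
        sSup ((fun ξ => ∏ i, |ξ - c i|) '' Set.Icc (0:ℝ) 1) + C * h) := by
  have hsub : Icc 0 h ⊆ Icc 0 T := Icc_subset_Icc_right hhT
  have hR''_bound : ∀ t ∈ Ico 0 h, ‖R'' t‖ ≤ h ^ s *
      (sSup ((fun ξ => |g (ξ * h)|) '' Icc (0:ℝ) 1) *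
        sSup ((fun ξ => ∏ i, |ξ - c i|) '' Icc (0:ℝ) 1)) + C * h ^ (s + 1) := by
    intro t ht
    have htT := hsub (Ico_subset_Icc_self ht)
    rw [Real.norm_eq_abs, hdecomp t htT]
    exact (abs_add_le _ _).trans (add_le_add
      (abs_mul_prod_sub_le c hh (hgcont.mono hsub) (Ico_subset_Icc_self ht)) (hE t htT))
  have hmvt := norm_image_sub_le_of_norm_deriv_le_segment'
    (fun t ht => (hR'' t (hsub ht)).mono hsub) hR''_bound h (right_mem_Icc.2 hh.le)
  rw [hR'0, sub_zero, sub_zero, Real.norm_eq_abs] at hmvt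
  exact hmvt.trans_eq (by ring)

theorem stmt_10 (s : ℕ) (c : Fin s → ℝ) (T : ℝ) (hT : 0 < T)
    (R R' R'' g E : ℝ → ℝ) (h : ℝ) (hh : 0 < h) (hhT : h ≤ T)
    (hR' : ∀ t ∈ Set.Icc 0 T, HasDerivWithinAt R (R' t) (Set.Icc 0 T) t)
    (hR'' : ∀ t ∈ Set.Icc 0 T, HasDerivWithinAt R' (R'' t) (Set.Icc 0 T) t)
    (hR''cont : ContinuousOn R'' (Set.Icc 0 T))
    (hgcont : ContinuousOn g (Set.Icc 0 T))
    (hR0 : R 0 = 0) (hR'0 : R' 0 = 0)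
    (hdecomp : ∀ t ∈ Set.Icc 0 T, R'' t = g t * (∏ i, (t - c i * h)) + E t)
    (C : ℝ) (hE : ∀ t ∈ Set.Icc 0 T, |E t| ≤ C * h ^ (s + 1)) :
    |R' h| ≤ h ^ (s + 1) *
      (sSup ((fun ξ => |g (ξ * h)|) '' Set.Icc (0:ℝ) 1) *
        sSup ((fun ξ => ∏ i, |ξ - c i|) '' Set.Icc (0:ℝ) 1) + C * h) :=
  stmt_10_general s c T R' R'' g E h hh hhT hR'' hgcont hR'0 hdecomp C hE
end
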